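/- Let a, b, c > 0 with c ≤ a + b. There exists a constant C > 0, depending only on a, with the following property. For every t ≥ 0 and every A : ℝ²_+ → ℝ such that for a.e. x the function y ↦ A(x,y) is C¹ on [0,∞) with A(x,y) → 0 as y → ∞ and A(x,y) = −∫_y^∞ ∂_y A(x,y') dy', and such that e^{aΨ(t,·)} ∂_y A ∈ L²(ℝ²_+), one has for every y ≥ 0: (∫_ℝ e^{2(c−b)Ψ(t,y)} A(x,y)² dx)^{1/2} ≤ C ⟨t⟩^{1/4} (∫_{ℝ²_+} e^{2aΨ(t,y')} (∂_y A(x,y'))² dx dy')^{1/2}. -/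

import Mathlib

open MeasureTheory Real Set Filter Topology

/-! Put `α = a / (4⟨t⟩)`, so that `2aΨ(t,y) = αy²`. For fixed `x`, Cauchy–Schwarz with the weights
`e^{∓αy'²}` applied to `A(x,y) = -∫_y^∞ ∂_yA(x,y') dy'` gives
`e^{αy²} A(x,y)² ≤ e^{αy²} (∫_y^∞ e^{-αy'²} dy') ∫_0^∞ e^{αy'²} (∂_yA)² dy'`,
and since `y'² ≥ y² + (y' - y)²` for `y' ≥ y ≥ 0`, the Gaussian tail is at most `e^{-αy²} √(π/α)`.
Integrating in `x` bounds the left side by `√(π/α) = 2 √(π/a) ⟨t⟩^{1/2}` times the weighted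
energy; finally `c - b ≤ a` lets `e^{2aΨ}` dominate `e^{2(c-b)Ψ}`. -/

/-- The weight `Ψ(t,y) = y² / (8⟨t⟩)` with `⟨t⟩ = 1 + t`. -/
noncomputable def Psi (t y : ℝ) : ℝ := y ^ 2 / (8 * (1 + t))

/-- The half-plane `ℝ²_+ = {(x,y) : 0 < y}`. -/
def halfPlane : Set (ℝ × ℝ) := {p | 0 < p.2}

theorem halfPlane_eq_univ_prod : halfPlane = univ ×ˢ Ioi (0 : ℝ) := by
  ext p; simp [halfPlane]

theorem ENNReal.ofReal_exp_half_sq (u : ℝ) :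
    ENNReal.ofReal (exp (u / 2)) ^ 2 = ENNReal.ofReal (exp u) := by
  rw [← ENNReal.ofReal_pow (exp_nonneg _), ← exp_nat_mul]
  norm_num [mul_div_cancel₀]

theorem ENNReal.sq_lintegral_mul_le {X : Type*} [MeasurableSpace X] {μ : Measure X}
    {f g : X → ENNReal} (hf : AEMeasurable f μ) (hg : AEMeasurable g μ) :
    (∫⁻ x, f x * g x ∂μ) ^ 2 ≤ (∫⁻ x, f x ^ 2 ∂μ) * ∫⁻ x, g x ^ 2 ∂μ := by
  have hHolder := ENNReal.lintegral_mul_le_Lp_mul_Lq μ Real.HolderConjugate.two_two hf hg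
  simp only [Pi.mul_apply, ENNReal.rpow_two] at hHolder
  calc (∫⁻ x, f x * g x ∂μ) ^ 2
      ≤ ((∫⁻ x, f x ^ 2 ∂μ) ^ (1 / 2 : ℝ) * (∫⁻ x, g x ^ 2 ∂μ) ^ (1 / 2 : ℝ)) ^ 2 := by
        gcongr
    _ = (∫⁻ x, f x ^ 2 ∂μ) * ∫⁻ x, g x ^ 2 ∂μ := by
        rw [mul_pow, ← ENNReal.rpow_natCast, ← ENNReal.rpow_natCast, ← ENNReal.rpow_mul,
          ← ENNReal.rpow_mul]
        norm_num

theorem ofReal_sq_integral_le_lintegral_mul_lintegral {X : Type*} [MeasurableSpace X]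
    {μ : Measure X} {g w : X → ℝ} (hg : AEMeasurable g μ) (hw : AEMeasurable w μ) :
    ENNReal.ofReal ((∫ x, g x ∂μ) ^ 2) ≤
      (∫⁻ x, ENNReal.ofReal (exp (-w x)) ∂μ) * ∫⁻ x, ENNReal.ofReal (exp (w x) * g x ^ 2) ∂μ := by
  have hsplit : ∀ x, ‖g x‖ₑ =
      ENNReal.ofReal (exp (-w x / 2)) * (ENNReal.ofReal (exp (w x / 2)) * ‖g x‖ₑ) := by
    intro x
    rw [← mul_assoc, ← ENNReal.ofReal_mul (exp_nonneg _), ← exp_add, neg_div,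
      neg_add_cancel, exp_zero, ENNReal.ofReal_one, one_mul]
  have henorm_sq : ∀ v : ℝ, ‖v‖ₑ ^ 2 = ENNReal.ofReal (v ^ 2) := by
    intro v
    rw [Real.enorm_eq_ofReal_abs, ← ENNReal.ofReal_pow (abs_nonneg _), sq_abs]
  calc ENNReal.ofReal ((∫ x, g x ∂μ) ^ 2) = ‖∫ x, g x ∂μ‖ₑ ^ 2 := (henorm_sq _).symm
    _ ≤ (∫⁻ x, ‖g x‖ₑ ∂μ) ^ 2 := by gcongr; exact enorm_integral_le_lintegral_enorm _
    _ ≤ _ := by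
        rw [lintegral_congr hsplit]
        refine (ENNReal.sq_lintegral_mul_le (by fun_prop) (by fun_prop)).trans_eq ?_
        simp only [mul_pow, ENNReal.ofReal_exp_half_sq, henorm_sq,
          ENNReal.ofReal_mul (exp_nonneg _)]

theorem lintegral_exp_neg_mul_sq {α : ℝ} (hα : 0 < α) :
    ∫⁻ z, ENNReal.ofReal (exp (-(α * z ^ 2))) = ENNReal.ofReal (√(π / α)) := by
  rw [← ofReal_integral_eq_lintegral_ofReal _ (ae_of_all _ fun _ => (exp_nonneg _))]
  · simp_rw [← neg_mul, integral_gaussian]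
  · simpa only [neg_mul] using integrable_exp_neg_mul_sq hα

theorem lintegral_Ioi_exp_neg_mul_sq_le {α y : ℝ} (hα : 0 < α) (hy : 0 ≤ y) :
    ∫⁻ z in Ioi y, ENNReal.ofReal (exp (-(α * z ^ 2))) ≤
      ENNReal.ofReal (exp (-(α * y ^ 2)) * √(π / α)) := by
  calc ∫⁻ z in Ioi y, ENNReal.ofReal (exp (-(α * z ^ 2)))
      ≤ ∫⁻ z in Ioi y,
          ENNReal.ofReal (exp (-(α * y ^ 2))) * ENNReal.ofReal (exp (-(α * (z - y) ^ 2))) := by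
        refine setLIntegral_mono (by fun_prop) fun z hz => ?_
        rw [← ENNReal.ofReal_mul (exp_nonneg _), ← exp_add]
        gcongr
        nlinarith [mul_nonneg (mul_nonneg hα.le hy) (sub_nonneg.2 (le_of_lt (mem_Ioi.1 hz)))]
    _ ≤ ENNReal.ofReal (exp (-(α * y ^ 2))) *
          ∫⁻ z, ENNReal.ofReal (exp (-(α * (z - y) ^ 2))) := by
        rw [lintegral_const_mul' _ _ ENNReal.ofReal_ne_top]
        gcongr
        exact Measure.restrict_le_self
    _ = ENNReal.ofReal (exp (-(α * y ^ 2)) * √(π / α)) := by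
        rw [lintegral_sub_right_eq_self (fun z => ENNReal.ofReal (exp (-(α * z ^ 2)))) y,
          lintegral_exp_neg_mul_sq hα, ENNReal.ofReal_mul (exp_nonneg _)]

theorem ofReal_exp_mul_sq_mul_sq_integral_Ioi_le {g : ℝ → ℝ} (hg : Measurable g) {α y : ℝ}
    (hα : 0 < α) (hy : 0 ≤ y) :
    ENNReal.ofReal (exp (α * y ^ 2) * (∫ z in Ioi y, g z) ^ 2) ≤
      ENNReal.ofReal (√(π / α)) * ∫⁻ z in Ioi 0, ENNReal.ofReal (exp (α * z ^ 2) * g z ^ 2) := by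
  calc ENNReal.ofReal (exp (α * y ^ 2) * (∫ z in Ioi y, g z) ^ 2)
      = ENNReal.ofReal (exp (α * y ^ 2)) * ENNReal.ofReal ((∫ z in Ioi y, g z) ^ 2) :=
        ENNReal.ofReal_mul (exp_nonneg _)
    _ ≤ ENNReal.ofReal (exp (α * y ^ 2)) *
          ((∫⁻ z in Ioi y, ENNReal.ofReal (exp (-(α * z ^ 2)))) *
            ∫⁻ z in Ioi y, ENNReal.ofReal (exp (α * z ^ 2) * g z ^ 2)) := by
        gcongr
        exact ofReal_sq_integral_le_lintegral_mul_lintegral (w := fun z => α * z ^ 2)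
          hg.aemeasurable (by fun_prop)
    _ ≤ ENNReal.ofReal (exp (α * y ^ 2)) *
          (ENNReal.ofReal (exp (-(α * y ^ 2)) * √(π / α)) *
            ∫⁻ z in Ioi 0, ENNReal.ofReal (exp (α * z ^ 2) * g z ^ 2)) := by
        gcongr
        exact lintegral_Ioi_exp_neg_mul_sq_le hα hy
    _ = ENNReal.ofReal (√(π / α)) *
          ∫⁻ z in Ioi 0, ENNReal.ofReal (exp (α * z ^ 2) * g z ^ 2) := by
        rw [← mul_assoc, ← ENNReal.ofReal_mul (exp_nonneg _), ← mul_assoc, ← exp_add,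
          add_neg_cancel, exp_zero, one_mul]

theorem lintegral_exp_mul_sq_mul_sq_le_of_eq_neg_integral_deriv {A : ℝ → ℝ → ℝ} {α y : ℝ}
    (hα : 0 < α) (hy : 0 ≤ y) (hA : ∀ᵐ x, A x y = -∫ z in Ioi y, deriv (A x) z)
    (hdA : AEMeasurable (fun p : ℝ × ℝ => deriv (A p.1) p.2) (volume.restrict halfPlane)) :
    ∫⁻ x, ENNReal.ofReal (exp (α * y ^ 2) * A x y ^ 2) ≤
      ENNReal.ofReal (√(π / α)) *
        ∫⁻ p in halfPlane, ENNReal.ofReal (exp (α * p.2 ^ 2) * deriv (A p.1) p.2 ^ 2) := by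
  have hF : AEMeasurable
      (fun p : ℝ × ℝ => ENNReal.ofReal (exp (α * p.2 ^ 2) * deriv (A p.1) p.2 ^ 2))
      (volume.restrict halfPlane) := by fun_prop
  rw [halfPlane_eq_univ_prod, Measure.volume_eq_prod] at hF ⊢
  rw [setLIntegral_prod _ hF, Measure.restrict_univ,
    ← lintegral_const_mul' _ _ ENNReal.ofReal_ne_top]
  refine lintegral_mono_ae (hA.mono fun x hx => ?_)
  rw [hx, neg_sq]
  exact ofReal_exp_mul_sq_mul_sq_integral_Ioi_le (measurable_deriv _) hα hy

theorem two_mul_mul_Psi (a : ℝ) {t : ℝ} (ht : 1 + t ≠ 0) (z : ℝ) :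
    2 * a * Psi t z = a / (4 * (1 + t)) * z ^ 2 := by
  unfold Psi
  field_simp
  ring

theorem weighted_trace_estimate_general (a b c : ℝ) (ha : 0 < a)
    (hcab : c ≤ a + b) :
    ∃ C : ℝ, 0 < C ∧ ∀ t : ℝ, 0 ≤ t → ∀ A : ℝ → ℝ → ℝ,
      (∀ᵐ x ∂(volume : Measure ℝ), ContDiffOn ℝ 1 (A x) (Ici 0) ∧
        Tendsto (A x) atTop (𝓝 0) ∧
        ∀ y : ℝ, A x y = -∫ y' in Ioi y, deriv (A x) y') →
      MemLp (fun p : ℝ × ℝ => exp (a * Psi t p.2) * deriv (A p.1) p.2) 2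
        (volume.restrict halfPlane) →
      ∀ y : ℝ, 0 ≤ y →
        (∫⁻ x : ℝ, ENNReal.ofReal (exp (2 * (c - b) * Psi t y) * A x y ^ 2)) ^ ((1:ℝ)/2)
          ≤ ENNReal.ofReal (C * (1 + t) ^ ((1:ℝ)/4)) *
            (∫⁻ p in halfPlane,
              ENNReal.ofReal (exp (2 * a * Psi t p.2) * (deriv (A p.1) p.2) ^ 2)) ^ ((1:ℝ)/2) := by
  refine ⟨(4 * π / a) ^ ((1 : ℝ) / 4), by positivity, fun t ht A hA hL2 y hy => ?_⟩
  set α := a / (4 * (1 + t)) with hα_def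
  have hα : 0 < α := by positivity
  have hdA : AEMeasurable (fun p : ℝ × ℝ => deriv (A p.1) p.2) (volume.restrict halfPlane) := by
    have hexp : Measurable fun p : ℝ × ℝ => exp (-(a * Psi t p.2)) := by unfold Psi; fun_prop
    refine (hexp.aemeasurable.mul hL2.aestronglyMeasurable.aemeasurable).congr
      (ae_of_all _ fun p => ?_)
    simp only [Pi.mul_apply, ← mul_assoc, ← exp_add, neg_add_cancel, exp_zero, one_mul]
  have hconst : ENNReal.ofReal (√(π / α)) ^ ((1 : ℝ) / 2) =
      ENNReal.ofReal ((4 * π / a) ^ ((1 : ℝ) / 4) * (1 + t) ^ ((1 : ℝ) / 4)) := by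
    rw [ENNReal.ofReal_rpow_of_nonneg (by positivity) (by norm_num), sqrt_eq_rpow,
      ← rpow_mul (by positivity), ← mul_rpow (by positivity) (by positivity)]
    congr 2
    · rw [hα_def]; field_simp
    · norm_num
  have hweight : ∀ z, 2 * a * Psi t z = α * z ^ 2 := two_mul_mul_Psi a (by positivity)
  simp only [hweight]
  rw [← hconst, ← ENNReal.mul_rpow_of_nonneg _ _ (by norm_num)]
  refine ENNReal.rpow_le_rpow (le_trans (lintegral_mono fun x => ?_)
    (lintegral_exp_mul_sq_mul_sq_le_of_eq_neg_integral_deriv hα hy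
      (hA.mono fun x hx => hx.2.2 y) hdA)) (by norm_num)
  have hPsi : 0 ≤ Psi t y := by unfold Psi; positivity
  rw [← hweight]
  gcongr
  nlinarith

/-- The weighted trace-type estimate (4.9): for `a, b, c > 0` with `c ≤ a + b`,
`‖e^{(c−b)Ψ(t,y)} A(·,y)‖_{L²_x} ≤ C ⟨t⟩^{1/4} ‖e^{aΨ} ∂_y A‖_{L²(ℝ²_+)}` for every `y ≥ 0`. -/
theorem weighted_trace_estimate (a b c : ℝ) (ha : 0 < a) (hb : 0 < b) (hc : 0 < c)
    (hcab : c ≤ a + b) :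
    ∃ C : ℝ, 0 < C ∧ ∀ t : ℝ, 0 ≤ t → ∀ A : ℝ → ℝ → ℝ,
      (∀ᵐ x ∂(volume : Measure ℝ), ContDiffOn ℝ 1 (A x) (Ici 0) ∧
        Tendsto (A x) atTop (𝓝 0) ∧
        ∀ y : ℝ, A x y = -∫ y' in Ioi y, deriv (A x) y') →
      MemLp (fun p : ℝ × ℝ => exp (a * Psi t p.2) * deriv (A p.1) p.2) 2
        (volume.restrict halfPlane) →
      ∀ y : ℝ, 0 ≤ y →
        (∫⁻ x : ℝ, ENNReal.ofReal (exp (2 * (c - b) * Psi t y) * A x y ^ 2)) ^ ((1:ℝ)/2)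
          ≤ ENNReal.ofReal (C * (1 + t) ^ ((1:ℝ)/4)) *
            (∫⁻ p in halfPlane,
              ENNReal.ofReal (exp (2 * a * Psi t p.2) * (deriv (A p.1) p.2) ^ 2)) ^ ((1:ℝ)/2) :=
  weighted_trace_estimate_general a b c ha hcab
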